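/- arXiv:1504.03623 — 2 statements merged into one kernel-verified Lean document; each statement's English description precedes it below -/
import Mathlib

section
/- Let 𝓕 be an indexed family. If there exist sets A, B ∈ 𝓕 with A ≠ B and A ∩ B ≠ ∅, then 𝓕 is not PRT-learnable. -/
/-!
Common framework: indexed families of c.e. sets, enumerations (texts),
learning machines with run-time, membership-oracle machines, teachers,
and the learning criteria PRT/PSD/PMC/PCS with oracle/teacher variants.
-/

namespace TeachLearn

attribute [local instance] Classical.propDecidable

/-- The initial segment (finite string) of length `n` of the infinite sequence `f`. -/
def str (f : ℕ → ℕ) (n : ℕ) : List ℕ := (List.range n).map f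

/-- `f` is an enumeration (a text) of the set `A`: its set of values is exactly `A`. -/
def IsEnum (f : ℕ → ℕ) (A : Set ℕ) : Prop := Set.range f = A

/-- An indexed family: a uniformly computably enumerable sequence of nonempty
subsets of `ℕ`. -/
structure IndexedFamily where
  F : ℕ → Set ℕ
  nonempty : ∀ n, (F n).Nonempty
  uce : REPred fun p : ℕ × ℕ => p.1 ∈ F p.2

namespace IndexedFamily

/-- `A` is a member of the indexed family `𝓕`. -/
def Mem (𝓕 : IndexedFamily) (A : Set ℕ) : Prop := ∃ n, 𝓕.F n = A

/-- The minimal index of `A` in the indexed family `𝓕`. -/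
noncomputable def mi (𝓕 : IndexedFamily) (A : Set ℕ) : ℕ := sInf {n | 𝓕.F n = A}

end IndexedFamily

/-- A learning machine: a partial computable map from finite strings to
hypotheses, together with a (cumulative) run-time function.  The run-time is
defined exactly when the machine halts, dominates the length of the input read
as well as the size of the output produced, and is monotone along prefixes
(time is accumulated while reading an enumeration). -/
structure Machine where
  eval : List ℕ →. ℕ
  partrec : Partrec eval
  time : List ℕ →. ℕ
  time_dom : ∀ σ, (time σ).Dom ↔ (eval σ).Dom
  length_le_time : ∀ ⦃σ t⦄, t ∈ time σ → σ.length ≤ t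
  size_le_time : ∀ ⦃σ t h⦄, t ∈ time σ → h ∈ eval σ → Nat.size h ≤ t
  time_mono : ∀ ⦃σ τ s t⦄, σ <+: τ → s ∈ time σ → t ∈ time τ → s ≤ t

/-- A teacher: a computable, prefix-monotone map on finite strings whose
output consists of elements of its input. -/
structure Teacher where
  t : List ℕ → List ℕ
  computable : Computable t
  mono : ∀ ⦃σ τ⦄, σ <+: τ → t σ <+: t τ
  content_sub : ∀ ⦃σ x⦄, x ∈ t σ → x ∈ σ

/-- A learning machine with access to a membership oracle, modeled
interactively: `step (σ, ans)` is the machine's action on input string `σ`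
after having received the list `ans` of oracle answers so far; an even value
`2 * q` asks the oracle whether `q` belongs to the target, while an odd value
`2 * h + 1` halts the interaction with hypothesis `h`.  The run-time dominates
the length of the input read, the number of oracle queries asked, and the size
of the value produced, and is monotone (cumulative). -/
structure OMachine where
  step : List ℕ × List Bool →. ℕ
  partrec : Partrec step
  time : List ℕ × List Bool →. ℕ
  time_dom : ∀ x, (time x).Dom ↔ (step x).Dom
  length_le_time : ∀ ⦃x t⦄, t ∈ time x → x.1.length ≤ t
  queries_le_time : ∀ ⦃x t⦄, t ∈ time x → x.2.length ≤ t
  size_le_time : ∀ ⦃x t v⦄, t ∈ time x → v ∈ step x → Nat.size v ≤ t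
  time_mono : ∀ ⦃σ τ a b s t⦄, σ <+: τ → a <+: b →
    s ∈ time (σ, a) → t ∈ time (τ, b) → s ≤ t

namespace OMachine

/-- The answer lists reachable in the interaction of the machine `M` with the
membership oracle for `A` on the input string `σ`. -/
inductive Reach (M : OMachine) (A : Set ℕ) (σ : List ℕ) : List Bool → Prop
  | nil : Reach M A σ []
  | query {ans q} : Reach M A σ ans → (2 * q) ∈ M.step (σ, ans) →
      Reach M A σ (ans ++ [decide (q ∈ A)])

/-- `M.Out A σ h ans`: on input `σ`, interacting with the membership oracle
for `A`, the machine `M` receives the oracle answers `ans` and halts with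
hypothesis `h`. -/
def Out (M : OMachine) (A : Set ℕ) (σ : List ℕ) (h : ℕ) (ans : List Bool) : Prop :=
  M.Reach A σ ans ∧ (2 * h + 1) ∈ M.step (σ, ans)

/-- With oracle `A`, on the stage inputs `I`, the machine `M` outputs the
hypothesis `h` from stage `n` onwards. -/
def Settles (M : OMachine) (A : Set ℕ) (I : ℕ → List ℕ) (h n : ℕ) : Prop :=
  ∀ m, n ≤ m → ∃ ans, M.Out A (I m) h ans

end OMachine

/-- A teacher for the teacher-and-oracle model: it additionally has access to
the oracle answers received so far by the learner. -/
structure OTeacher where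
  t : List ℕ → List Bool → List ℕ
  computable : Computable₂ t
  mono : ∀ ⦃σ τ a b⦄, σ <+: τ → a <+: b → t σ a <+: t τ b
  content_sub : ∀ ⦃σ a x⦄, x ∈ t σ a → x ∈ σ

/-- On the stage inputs `I`, the machine `M` outputs the hypothesis `h` from
stage `n` onwards. -/
def Machine.Settles (M : Machine) (I : ℕ → List ℕ) (h n : ℕ) : Prop :=
  ∀ m, n ≤ m → M.eval (I m) = Part.some h

/-- Settling for the teacher-and-oracle model: `hist m` records the oracle
answers the learner received at stage `m - 1`, which the teacher sees at
stage `m`.  From stage `n` on, the learner outputs `h`. -/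
def OMachine.TOSettles (M : OMachine) (T : OTeacher) (A : Set ℕ) (f : ℕ → ℕ)
    (hist : ℕ → List Bool) (h n : ℕ) : Prop :=
  ∀ m, n ≤ m → M.Out A (T.t (str f m) (hist m)) h (hist (m + 1))

/-! ### Polynomial run-time (PRT) -/

/-- `M` converges to the hypothesis `h` on the stage inputs `I` within fewer
than `B` computation steps. -/
def Machine.PRTIdentifies (M : Machine) (I : ℕ → List ℕ) (h B : ℕ) : Prop :=
  ∃ n, M.Settles I h n ∧ ∃ t, t ∈ M.time (I n) ∧ t < B

/-- Oracle version of `Machine.PRTIdentifies`; the run-time bound also bounds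
the oracle use (by `queries_le_time`). -/
def OMachine.PRTIdentifies (M : OMachine) (A : Set ℕ) (I : ℕ → List ℕ) (h B : ℕ) : Prop :=
  ∃ n, M.Settles A I h n ∧
    ∃ ans t, M.Out A (I n) h ans ∧ t ∈ M.time (I n, ans) ∧ t < B

/-- `M` PRT-learns `𝓕` with polynomial bound `p`. -/
def PRTLearnsWith (M : Machine) (p : Polynomial ℕ) (𝓕 : IndexedFamily) : Prop :=
  ∀ A, 𝓕.Mem A → ∀ f, IsEnum f A →
    ∃ h, 𝓕.F h = A ∧ M.PRTIdentifies (str f) h (p.eval (𝓕.mi A))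

/-- `𝓕` is PRT-learnable. -/
def PRT (𝓕 : IndexedFamily) : Prop := ∃ M p, PRTLearnsWith M p 𝓕

/-- The learner-teacher pair `(M, T)` PRT-learns `𝓕` with polynomial bound `p`. -/
def PRTTLearnsWith (M : Machine) (T : Teacher) (p : Polynomial ℕ) (𝓕 : IndexedFamily) : Prop :=
  ∀ A, 𝓕.Mem A → ∀ f, IsEnum f A →
    ∃ h, 𝓕.F h = A ∧ M.PRTIdentifies (fun m => T.t (str f m)) h (p.eval (𝓕.mi A))

/-- `𝓕` is PRT[T]-learnable. -/
def PRTT (𝓕 : IndexedFamily) : Prop := ∃ M T p, PRTTLearnsWith M T p 𝓕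

/-- `𝓕` is PRT[O]-learnable. -/
def PRTO (𝓕 : IndexedFamily) : Prop :=
  ∃ (M : OMachine) (p : Polynomial ℕ), ∀ A, 𝓕.Mem A → ∀ f, IsEnum f A →
    ∃ h, 𝓕.F h = A ∧ M.PRTIdentifies A (str f) h (p.eval (𝓕.mi A))

/-- `𝓕` is PRT[T,O]-learnable. -/
def PRTTO (𝓕 : IndexedFamily) : Prop :=
  ∃ (M : OMachine) (T : OTeacher) (p : Polynomial ℕ),
    ∀ A, 𝓕.Mem A → ∀ f, IsEnum f A →
      ∃ h, 𝓕.F h = A ∧ ∃ hist : ℕ → List Bool, hist 0 = [] ∧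
        ∃ n, M.TOSettles T A f hist h n ∧
          ∃ t, t ∈ M.time (T.t (str f n) (hist n), hist (n + 1)) ∧ t < p.eval (𝓕.mi A)

/-! ### Polynomial size dataset (PSD) -/

/-- `M` converges to `h` on an initial stage whose input contains fewer than
`B` distinct elements. -/
def Machine.PSDIdentifies (M : Machine) (I : ℕ → List ℕ) (h B : ℕ) : Prop :=
  ∃ n, M.Settles I h n ∧ (I n).toFinset.card < B

/-- Oracle version of `Machine.PSDIdentifies`; the oracle use is also bounded. -/
def OMachine.PSDIdentifies (M : OMachine) (A : Set ℕ) (I : ℕ → List ℕ) (h B : ℕ) : Prop :=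
  ∃ n, M.Settles A I h n ∧ (I n).toFinset.card < B ∧
    ∃ ans, M.Out A (I n) h ans ∧ ans.length ≤ B

/-- `𝓕` is PSD-learnable. -/
def PSD (𝓕 : IndexedFamily) : Prop :=
  ∃ (M : Machine) (p : Polynomial ℕ), ∀ A, 𝓕.Mem A → ∀ f, IsEnum f A →
    ∃ h, 𝓕.F h = A ∧ M.PSDIdentifies (str f) h (p.eval (𝓕.mi A))

/-- `𝓕` is PSD[T]-learnable. -/
def PSDT (𝓕 : IndexedFamily) : Prop :=
  ∃ (M : Machine) (T : Teacher) (p : Polynomial ℕ), ∀ A, 𝓕.Mem A → ∀ f, IsEnum f A →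
    ∃ h, 𝓕.F h = A ∧ M.PSDIdentifies (fun m => T.t (str f m)) h (p.eval (𝓕.mi A))

/-- `𝓕` is PSD[O]-learnable. -/
def PSDO (𝓕 : IndexedFamily) : Prop :=
  ∃ (M : OMachine) (p : Polynomial ℕ), ∀ A, 𝓕.Mem A → ∀ f, IsEnum f A →
    ∃ h, 𝓕.F h = A ∧ M.PSDIdentifies A (str f) h (p.eval (𝓕.mi A))

/-- `𝓕` is PSD[T,O]-learnable. -/
def PSDTO (𝓕 : IndexedFamily) : Prop :=
  ∃ (M : OMachine) (T : OTeacher) (p : Polynomial ℕ),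
    ∀ A, 𝓕.Mem A → ∀ f, IsEnum f A →
      ∃ h, 𝓕.F h = A ∧ ∃ hist : ℕ → List Bool, hist 0 = [] ∧
        ∃ n, M.TOSettles T A f hist h n ∧
          (T.t (str f n) (hist n)).toFinset.card < p.eval (𝓕.mi A) ∧
          (hist (n + 1)).length ≤ p.eval (𝓕.mi A)

/-! ### Polynomial mind-changes (PMC) -/

/-- The set of positions at which the hypothesis stream `g` changes its mind. -/
def MindChanges (g : ℕ → ℕ) : Set ℕ := {i | g i ≠ g (i + 1)}

/-- The hypothesis stream `g` changes its mind at most `B` times, and the only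
hypothesis appearing infinitely often in it is an index of `A` in `𝓕`. -/
def PMCCriterion (𝓕 : IndexedFamily) (A : Set ℕ) (g : ℕ → ℕ) (B : ℕ) : Prop :=
  (MindChanges g).Finite ∧ (MindChanges g).ncard ≤ B ∧
    ∀ h, {i | g i = h}.Infinite → 𝓕.F h = A

/-- `𝓕` is PMC-learnable. -/
def PMC (𝓕 : IndexedFamily) : Prop :=
  ∃ (M : Machine) (p : Polynomial ℕ), ∀ A, 𝓕.Mem A → ∀ f, IsEnum f A →
    ∃ g : ℕ → ℕ, (∀ m, M.eval (str f m) = Part.some (g m)) ∧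
      PMCCriterion 𝓕 A g (p.eval (𝓕.mi A))

/-- `𝓕` is PMC[T]-learnable. -/
def PMCT (𝓕 : IndexedFamily) : Prop :=
  ∃ (M : Machine) (T : Teacher) (p : Polynomial ℕ), ∀ A, 𝓕.Mem A → ∀ f, IsEnum f A →
    ∃ g : ℕ → ℕ, (∀ m, M.eval (T.t (str f m)) = Part.some (g m)) ∧
      PMCCriterion 𝓕 A g (p.eval (𝓕.mi A))

/-- `𝓕` is PMC[O]-learnable. -/
def PMCO (𝓕 : IndexedFamily) : Prop :=
  ∃ (M : OMachine) (p : Polynomial ℕ), ∀ A, 𝓕.Mem A → ∀ f, IsEnum f A →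
    ∃ g : ℕ → ℕ,
      (∀ m, ∃ ans, M.Out A (str f m) (g m) ans ∧ ans.length ≤ p.eval (𝓕.mi A)) ∧
      PMCCriterion 𝓕 A g (p.eval (𝓕.mi A))

/-- `𝓕` is PMC[T,O]-learnable. -/
def PMCTO (𝓕 : IndexedFamily) : Prop :=
  ∃ (M : OMachine) (T : OTeacher) (p : Polynomial ℕ),
    ∀ A, 𝓕.Mem A → ∀ f, IsEnum f A →
      ∃ hist : ℕ → List Bool, hist 0 = [] ∧
        ∃ g : ℕ → ℕ,
          (∀ m, M.Out A (T.t (str f m) (hist m)) (g m) (hist (m + 1)) ∧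
            (hist (m + 1)).length ≤ p.eval (𝓕.mi A)) ∧
          PMCCriterion 𝓕 A g (p.eval (𝓕.mi A))

/-! ### Polynomial size characteristic sample (PCS) -/

/-- `𝓕` is PCS-learnable: there are a machine, a polynomial bound and an
assignment of a characteristic sample to each member of `𝓕`. -/
def PCS (𝓕 : IndexedFamily) : Prop :=
  ∃ (M : Machine) (p : Polynomial ℕ) (S : Set ℕ → Finset ℕ),
    ∀ A, 𝓕.Mem A → ↑(S A) ⊆ A ∧ (S A).card < p.eval (𝓕.mi A) ∧
      ∃ e, 𝓕.F e = A ∧ ∀ f, IsEnum f A → ∀ n, (∀ x ∈ S A, x ∈ str f n) →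
        M.eval (str f n) = Part.some e

/-- `𝓕` is PCS[O]-learnable. -/
def PCSO (𝓕 : IndexedFamily) : Prop :=
  ∃ (M : OMachine) (p : Polynomial ℕ) (S : Set ℕ → Finset ℕ),
    ∀ A, 𝓕.Mem A → ↑(S A) ⊆ A ∧ (S A).card < p.eval (𝓕.mi A) ∧
      ∃ e, 𝓕.F e = A ∧ ∀ f, IsEnum f A → ∀ n, (∀ x ∈ S A, x ∈ str f n) →
        ∃ ans, M.Out A (str f n) e ans ∧ ans.length ≤ p.eval (𝓕.mi A)

/-- `𝓕` is PCS[T]-learnable: the characteristic sample must eventually appear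
in the teacher's output stream, after which the learner locks onto a correct
index. -/
def PCST (𝓕 : IndexedFamily) : Prop :=
  ∃ (M : Machine) (T : Teacher) (p : Polynomial ℕ) (S : Set ℕ → Finset ℕ),
    ∀ A, 𝓕.Mem A → ↑(S A) ⊆ A ∧ (S A).card < p.eval (𝓕.mi A) ∧
      ∃ e, 𝓕.F e = A ∧ ∀ f, IsEnum f A →
        (∃ n, ∀ x ∈ S A, x ∈ T.t (str f n)) ∧
        ∀ n, (∀ x ∈ S A, x ∈ T.t (str f n)) → M.eval (T.t (str f n)) = Part.some e

/-- `𝓕` is PCS[T,O]-learnable. -/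
def PCSTO (𝓕 : IndexedFamily) : Prop :=
  ∃ (M : OMachine) (T : OTeacher) (p : Polynomial ℕ) (S : Set ℕ → Finset ℕ),
    ∀ A, 𝓕.Mem A → ↑(S A) ⊆ A ∧ (S A).card < p.eval (𝓕.mi A) ∧
      ∃ e, 𝓕.F e = A ∧ ∀ f, IsEnum f A →
        ∃ hist : ℕ → List Bool, hist 0 = [] ∧
          (∃ n, ∀ x ∈ S A, x ∈ T.t (str f n) (hist n)) ∧
          ∀ n, (∀ x ∈ S A, x ∈ T.t (str f n) (hist n)) →
            M.Out A (T.t (str f n) (hist n)) e (hist (n + 1)) ∧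
            (hist (n + 1)).length ≤ p.eval (𝓕.mi A)


/-!
A run-time bound `B` forces the learner to settle after reading fewer than `B` symbols of the
text, since the run-time dominates the length of the input read.  If `c ∈ A ∩ B`, the texts of
`A` and of `B` that start with `K` copies of `c`, where `K` exceeds both polynomial bounds, are
indistinguishable on their first `K` symbols, so the learner settles on the same hypothesis for
both, which then indexes both `A` and `B`.
-/

lemma str_length (f : ℕ → ℕ) (n : ℕ) : (str f n).length = n := by
  simp [str]

lemma str_congr {f g : ℕ → ℕ} {m : ℕ} (h : ∀ i < m, f i = g i) : str f m = str g m :=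
  List.map_congr_left fun i hi => h i (List.mem_range.mp hi)

lemma exists_isEnum {A : Set ℕ} (hA : A.Nonempty) : ∃ f, IsEnum f A := by
  obtain ⟨f, hf⟩ := A.to_countable.exists_eq_range hA
  exact ⟨f, hf.symm⟩

lemma isEnum_pad {f : ℕ → ℕ} {A : Set ℕ} (hf : IsEnum f A) {c : ℕ} (hc : c ∈ A) (K : ℕ) :
    IsEnum (fun k => if k < K then c else f (k - K)) A := by
  ext x
  constructor
  · rintro ⟨k, rfl⟩
    dsimp only
    split_ifs
    · exact hc
    · exact hf ▸ Set.mem_range_self _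
  · intro hx
    obtain ⟨j, rfl⟩ : x ∈ Set.range f := hf ▸ hx
    exact ⟨j + K, by simp⟩

lemma Machine.PRTIdentifies.exists_settles_lt {M : Machine} {f : ℕ → ℕ} {h B : ℕ}
    (hM : M.PRTIdentifies (str f) h B) : ∃ n < B, M.Settles (str f) h n := by
  obtain ⟨n, hsettles, t, ht, htB⟩ := hM
  have hnt : n ≤ t := str_length f n ▸ M.length_le_time ht
  exact ⟨n, hnt.trans_lt htB, hsettles⟩

lemma Machine.PRTIdentifies.hyp_eq_of_agree {M : Machine} {f g : ℕ → ℕ} {h h' B B' : ℕ}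
    (hf : M.PRTIdentifies (str f) h B) (hg : M.PRTIdentifies (str g) h' B')
    (hfg : ∀ i < max B B', f i = g i) : h = h' := by
  obtain ⟨n, hn, hsf⟩ := hf.exists_settles_lt
  obtain ⟨n', hn', hsg⟩ := hg.exists_settles_lt
  have hstr : str f (max n n') = str g (max n n') := str_congr fun i hi => hfg i (by omega)
  have hf_out := hsf _ (le_max_left n n')
  rw [hstr, hsg _ (le_max_right n n')] at hf_out
  exact (Part.some_inj.mp hf_out).symm

/-- If an indexed family contains two distinct members with
nonempty intersection, then it is not PRT-learnable. -/
theorem stmt0 (𝓕 : IndexedFamily) (A B : Set ℕ) (hA : 𝓕.Mem A) (hB : 𝓕.Mem B)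
    (hne : A ≠ B) (hint : (A ∩ B).Nonempty) : ¬ PRT 𝓕 := by
  rintro ⟨M, p, hlearn⟩
  obtain ⟨c, hcA, hcB⟩ := hint
  obtain ⟨fA, hfA⟩ := exists_isEnum ⟨c, hcA⟩
  obtain ⟨fB, hfB⟩ := exists_isEnum ⟨c, hcB⟩
  set K := max (p.eval (𝓕.mi A)) (p.eval (𝓕.mi B))
  obtain ⟨iA, hiA, hidA⟩ := hlearn A hA _ (isEnum_pad hfA hcA K)
  obtain ⟨iB, hiB, hidB⟩ := hlearn B hB _ (isEnum_pad hfB hcB K)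
  refine hne ?_
  rw [← hiA, ← hiB, hidA.hyp_eq_of_agree hidB fun i hi => ?_]
  simp [show i < K from hi]

end TeachLearn
end

section
/- Let 𝓕 = {F_n}_{n∈ℕ} be an indexed family and p a polynomial. If there are indices a and b_0, b_1, …, b_{p(a)−1} such that F_{b_0} ⊊ F_{b_1} ⊊ … ⊊ F_{b_{p(a)−1}} ⊊ F_a, then 𝓕 is not PRT[T]-learnable with polynomial bound p. -/
/-!
Common framework: indexed families of c.e. sets, enumerations (texts),
learning machines with run-time, membership-oracle machines, teachers,
and the learning criteria PRT/PSD/PMC/PCS with oracle/teacher variants.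
-/

namespace TeachLearn

attribute [local instance] Classical.propDecidable

/-!
Feed the learner, through the teacher, enumerations of `F_{b 0}, F_{b 1}, …` in turn, each
time extending the string built so far until the learner outputs an index of the current set.
All these strings lie in `F_a`, so the last one extends to an enumeration of `F_a`. Since the
chain is strict, the outputs at the `k = p(a)` recorded stages and at the final convergence
stage are indices of `k + 1` distinct sets; hence the teacher's outputs there are `k + 1`
distinct prefixes of its output at convergence, whose length, and with it the run-time, is at
least `k`. But the run-time is below `p(mi F_a) ≤ p(a) = k`.
-/

lemma _root_.Polynomial.eval_mono {R : Type*} [CommSemiring R] [PartialOrder R] [IsOrderedRing R]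
    [CanonicallyOrderedAdd R] (p : Polynomial R) : Monotone fun x => p.eval x := by
  intro x y hxy
  simp only [Polynomial.eval_eq_sum_range]
  gcongr

lemma _root_.List.le_length_of_prefix_of_injOn {α : Type*} {l : List α} {σ : ℕ → List α} {k : ℕ}
    (hpre : ∀ j ≤ k, σ j <+: l) (hinj : Set.InjOn σ (Set.Iic k)) : k ≤ l.length := by
  have hcard := Finset.card_le_card_of_injOn σ (s := Finset.range (k + 1))
    (t := l.inits.toFinset)
    (fun j hj => by simpa [List.mem_inits] using hpre j (Nat.lt_succ_iff.1 (by simpa using hj)))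
    (hinj.mono fun j hj => Nat.lt_succ_iff.1 (by simpa using hj))
  have := hcard.trans (List.toFinset_card_le _)
  simpa [List.length_inits] using this

lemma str_take (f : ℕ → ℕ) {m n : ℕ} (h : m ≤ n) : (str f n).take m = str f m := by
  simp [str, ← List.map_take, List.take_range, Nat.min_eq_left h]

lemma str_prefix (f : ℕ → ℕ) {m n : ℕ} (h : m ≤ n) : str f m <+: str f n :=
  str_take f h ▸ List.take_prefix _ _

lemma eq_str_length_of_prefix {f : ℕ → ℕ} {σ : List ℕ} {n : ℕ} (h : σ <+: str f n) :
    σ = str f σ.length :=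
  calc σ = (str f n).take σ.length := List.prefix_iff_eq_take.1 h
    _ = str f σ.length := str_take f (str_length f n ▸ h.length_le)

lemma mem_of_mem_str {f : ℕ → ℕ} {A : Set ℕ} (hf : IsEnum f A) {n x : ℕ} (hx : x ∈ str f n) :
    x ∈ A := by
  obtain ⟨j, -, rfl⟩ := List.mem_map.1 hx
  exact hf ▸ Set.mem_range_self j

lemma exists_isEnum_str_eq {A : Set ℕ} (hA : A.Nonempty) {L : List ℕ} (hL : ∀ x ∈ L, x ∈ A) :
    ∃ f, IsEnum f A ∧ str f L.length = L := by
  obtain ⟨x₀, hx₀⟩ := hA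
  let g : ℕ → ℕ := fun n => if n ∈ A then n else x₀
  refine ⟨fun n => if h : n < L.length then L[n] else g (n - L.length), ?_, ?_⟩
  · refine Set.Subset.antisymm ?_ fun y hy => ⟨L.length + y, by simp [g, hy]⟩
    rintro _ ⟨n, rfl⟩
    dsimp only [g]
    split_ifs with h hA
    exacts [hL _ (L.getElem_mem h), hA, hx₀]
  · exact List.ext_getElem (str_length _ _) fun i _ h => by simp [str, h]

def Machine.LimitLearns (M : Machine) (T : Teacher) (𝓕 : IndexedFamily) (A : Set ℕ) : Prop :=
  ∀ f, IsEnum f A → ∃ h n, 𝓕.F h = A ∧ M.Settles (fun m => T.t (str f m)) h n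

namespace Machine

variable {M : Machine} {T : Teacher} {𝓕 : IndexedFamily}

lemma limitLearns_of_prttLearnsWith {p : Polynomial ℕ} (hM : PRTTLearnsWith M T p 𝓕)
    (i : ℕ) : M.LimitLearns T 𝓕 (𝓕.F i) := fun f hf => by
  obtain ⟨h, hFh, n, hset, -⟩ := hM _ ⟨i, rfl⟩ f hf
  exact ⟨h, n, hFh, hset⟩

lemma LimitLearns.exists_prefix_eval_eq {A : Set ℕ} (hM : M.LimitLearns T 𝓕 A)
    (hA : A.Nonempty) {L : List ℕ} (hL : ∀ x ∈ L, x ∈ A) :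
    ∃ L', L <+: L' ∧ (∀ x ∈ L', x ∈ A) ∧ ∃ h, 𝓕.F h = A ∧ M.eval (T.t L') = Part.some h := by
  obtain ⟨f, hf, hfL⟩ := exists_isEnum_str_eq hA hL
  obtain ⟨h, n, hFh, hset⟩ := hM f hf
  have hLpre : L <+: str f (max n L.length) := by
    simpa only [hfL] using str_prefix f (le_max_right n L.length)
  exact ⟨str f (max n L.length), hLpre,
    fun x hx => mem_of_mem_str hf hx, h, hFh, hset _ (le_max_left _ _)⟩

lemma exists_prefixes_eval_eq {c : ℕ → Set ℕ} {k : ℕ} (hc : MonotoneOn c (Set.Iic k))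
    (hne : ∀ i < k, (c i).Nonempty) (hM : ∀ i < k, M.LimitLearns T 𝓕 (c i)) :
    ∃ L : List ℕ, (∀ x ∈ L, x ∈ c k) ∧
      ∀ j < k, ∃ σ, σ <+: L ∧ ∃ h, 𝓕.F h = c j ∧ M.eval (T.t σ) = Part.some h := by
  suffices ∀ i ≤ k, ∃ L : List ℕ, (∀ x ∈ L, x ∈ c i) ∧
      ∀ j < i, ∃ σ, σ <+: L ∧ ∃ h, 𝓕.F h = c j ∧ M.eval (T.t σ) = Part.some h from
    this k le_rfl
  intro i
  induction i with
  | zero => exact fun _ => ⟨[], by simp, by simp⟩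
  | succ i ih =>
    intro hik
    obtain ⟨L, hLc, hσ⟩ := ih (by omega)
    obtain ⟨L', hLL', hL'c, h, hFh, hL'h⟩ :=
      (hM i hik).exists_prefix_eval_eq (hne i hik) hLc
    have hci : c i ⊆ c (i + 1) :=
      hc (Set.mem_Iic.2 (by omega)) (Set.mem_Iic.2 hik) (by omega)
    refine ⟨L', fun x hx => hci (hL'c x hx), fun j hj => ?_⟩
    rcases Nat.lt_succ_iff_lt_or_eq.1 hj with hj | rfl
    · obtain ⟨σ, hσL, hσ⟩ := hσ j hj
      exact ⟨σ, hσL.trans hLL', hσ⟩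
    · exact ⟨L', List.prefix_refl _, h, hFh, hL'h⟩

theorem exists_isEnum_le_length_of_strictMonoOn {c : ℕ → Set ℕ} {k : ℕ}
    (hc : StrictMonoOn c (Set.Iic k)) (hne : ∀ i ≤ k, (c i).Nonempty)
    (hM : ∀ i < k, M.LimitLearns T 𝓕 (c i)) :
    ∃ f, IsEnum f (c k) ∧ ∀ h n, 𝓕.F h = c k → M.Settles (fun m => T.t (str f m)) h n →
      k ≤ (T.t (str f n)).length := by
  obtain ⟨L, hLc, hσ⟩ := exists_prefixes_eval_eq hc.monotoneOn (fun i hi => hne i hi.le) hM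
  obtain ⟨f, hf, hfL⟩ := exists_isEnum_str_eq (hne k le_rfl) hLc
  refine ⟨f, hf, fun h n hFh hset => ?_⟩
  choose! σ hσL H hFH hσH using hσ
  have hinj : ∀ {i j}, i ≤ k → j ≤ k → c i = c j → i = j := fun hi hj => hc.injOn hi hj
  -- from stage `n` on the learner outputs an index of `c k`, which is no index of `c j`
  have hσn : ∀ j < k, σ j <+: str f n := by
    intro j hj
    have hσj : σ j = str f (σ j).length := eq_str_length_of_prefix (hfL ▸ hσL j hj)
    rw [hσj]
    refine str_prefix f (le_of_not_ge fun hn => hj.ne (hinj hj.le le_rfl ?_))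
    have := hσH j hj
    rw [hσj, hset _ hn, Part.some_inj] at this
    rw [← hFH j hj, ← this, hFh]
  let τ : ℕ → List ℕ := fun j => if j < k then σ j else str f n
  let H' : ℕ → ℕ := fun j => if j < k then H j else h
  have hτ : ∀ j ≤ k, M.eval (T.t (τ j)) = Part.some (H' j) ∧ 𝓕.F (H' j) = c j := by
    intro j hj
    rcases hj.lt_or_eq with hj | rfl
    · simpa [τ, H', hj] using ⟨hσH j hj, hFH j hj⟩
    · simpa [τ, H'] using ⟨hset _ le_rfl, hFh⟩
  refine List.le_length_of_prefix_of_injOn (σ := fun j => T.t (τ j)) (fun j hj => ?_) ?_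
  · refine T.mono ?_
    rcases hj.lt_or_eq with hj | rfl
    · simpa [τ, hj] using hσn j hj
    · simp [τ]
  · intro i hi j hj hij
    have := (hτ i hi).1
    rw [show T.t (τ i) = T.t (τ j) from hij, (hτ j hj).1, Part.some_inj] at this
    exact hinj hi hj (by rw [← (hτ i hi).2, ← (hτ j hj).2, this])

end Machine

/-- If `𝓕` contains a chain `F_{b 0} ⊊ F_{b 1} ⊊ ⋯ ⊊
F_{b (p(a)-1)} ⊊ F_a` of length `p(a)`, then `𝓕` is not PRT[T]-learnable with
polynomial bound `p`. -/
theorem stmt3 (𝓕 : IndexedFamily) (p : Polynomial ℕ) (a : ℕ) (b : ℕ → ℕ)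
    (hchain : ∀ i, i + 1 < p.eval a → 𝓕.F (b i) ⊂ 𝓕.F (b (i + 1)))
    (htop : ∀ i, i < p.eval a → 𝓕.F (b i) ⊂ 𝓕.F a) :
    ¬ ∃ (M : Machine) (T : Teacher), PRTTLearnsWith M T p 𝓕 := by
  rintro ⟨M, T, hMT⟩
  set k := p.eval a
  let c : ℕ → Set ℕ := fun i => 𝓕.F (if i < k then b i else a)
  have hc : StrictMonoOn c (Set.Iic k) := strictMonoOn_Iic_of_lt_succ fun i hi => by
    rw [Order.succ_eq_add_one]
    rcases (show i + 1 ≤ k from hi).lt_or_eq with h | h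
    · simpa [c, hi, h] using hchain i h
    · simpa [c, hi, h] using htop i hi
  have hck : c k = 𝓕.F a := by simp [c]
  obtain ⟨f, hf, hlen⟩ := M.exists_isEnum_le_length_of_strictMonoOn hc
    (fun _ _ => 𝓕.nonempty _) (fun _ _ => M.limitLearns_of_prttLearnsWith hMT _)
  obtain ⟨h, hFh, n, hset, t, ht, htB⟩ := hMT _ ⟨a, rfl⟩ f (hck ▸ hf)
  have hkn : k ≤ (T.t (str f n)).length := hlen h n (hck ▸ hFh) hset
  have hnt : (T.t (str f n)).length ≤ t := M.length_le_time ht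
  have hBk : p.eval (𝓕.mi (𝓕.F a)) ≤ k := p.eval_mono (Nat.sInf_le rfl)
  omega

end TeachLearn
end
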